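/- arXiv:2407.11960 — 3 statements merged into one kernel-verified Lean document; each statement's English description precedes it below -/
import Mathlib

section
/- Let q ≥ 2 and let Q = (1/q²!) ∑_{U ∈ S} U ⊗ U be the average of the two-fold tensor power over all q²×q² permutation matrices. Define the one-site vectors |∘⟩ = (1/√q) ∑_{a=0}^{q-1} |aa⟩ ∈ ℂ^q ⊗ ℂ^q and |♭⟩ = (1/q) ∑_{a,b=0}^{q-1} |ab⟩ ∈ ℂ^q ⊗ ℂ^q, and regard two-site states as elements of (ℂ^q ⊗ ℂ^q) ⊗ (ℂ^q ⊗ ℂ^q) after appropriate reordering of tensor factors. Then Q |∘⟩|∘⟩ = |∘⟩|∘⟩, Q |♭⟩|♭⟩ = |♭⟩|♭⟩, and Q |∘⟩|♭⟩ = Q |♭⟩|∘⟩ = (√q/(1+q)) (|∘⟩|∘⟩ + |♭⟩|♭⟩). -/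
open Kronecker

/-- The permutation matrix of a permutation `g` of the two-site computational basis. -/
def permMat (q : ℕ) (g : Equiv.Perm (Fin q × Fin q)) :
    Matrix (Fin q × Fin q) (Fin q × Fin q) ℝ :=
  fun i j => if i = g j then 1 else 0

/-- The average of `U ⊗ U` over all `q² × q²` permutation matrices. -/
noncomputable def avgQ (q : ℕ) :
    Matrix ((Fin q × Fin q) × (Fin q × Fin q)) ((Fin q × Fin q) × (Fin q × Fin q)) ℝ :=
  (((q ^ 2).factorial : ℝ))⁻¹ •
    ∑ g : Equiv.Perm (Fin q × Fin q), (permMat q g) ⊗ₖ (permMat q g)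

/-- The one-site replica state `|∘⟩ = q^{-1/2} ∑ₐ |aa⟩`. -/
noncomputable def circState (q : ℕ) : Fin q × Fin q → ℝ :=
  fun p => if p.1 = p.2 then (Real.sqrt q)⁻¹ else 0

/-- The one-site replica state `|♭⟩ = q⁻¹ ∑_{a,b} |ab⟩`. -/
noncomputable def flatState (q : ℕ) : Fin q × Fin q → ℝ :=
  fun _ => (q : ℝ)⁻¹

/-- A product of one-site replica states at two sites, with the replica indices
interleaved so that `avgQ` acts as `U ⊗ U` on the pair of physical sites in
each replica: the index `((s₁,s₂),(s₁',s₂'))` groups the two physical sites of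
replica 1 and replica 2 respectively. -/
def twoSite (q : ℕ) (a b : Fin q × Fin q → ℝ) :
    ((Fin q × Fin q) × (Fin q × Fin q)) → ℝ :=
  fun x => a (x.1.1, x.2.1) * b (x.1.2, x.2.2)

/-!
The map `v ↦ avgQ q *ᵥ v` averages a function of a pair `(x, y)` of basis states over the
diagonal action of the full permutation group of the `q²` basis states. This action has exactly
two orbits, the diagonal and the off-diagonal pairs, so the average is the mean of `v` over the
orbit of `(x, y)`. The states `|∘⟩|∘⟩` and `|♭⟩|♭⟩` are invariant. The mixed state `|∘⟩|♭⟩` equals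
`r = 1/(q√q)` on the diagonal and has total mass `q³ r`, so its off-diagonal mean is
`(q³ - q²) r / (q⁴ - q²) = r / (1 + q)`; these two values are exactly those of
`√q/(1+q) (|∘⟩|∘⟩ + |♭⟩|♭⟩)`. The state `|♭⟩|∘⟩` is the same with the two sites exchanged.
-/

open Finset Matrix

theorem Finset.sum_diag_add_sum_offDiag {α M : Type*} [DecidableEq α] [AddCommMonoid M]
    (s : Finset α) (f : α × α → M) :
    ∑ a ∈ s, f (a, a) + ∑ p ∈ s.offDiag, f p = ∑ p ∈ s ×ˢ s, f p := by
  rw [← diag_union_offDiag, sum_union (disjoint_diag_offDiag s), diag, sum_map]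
  rfl

namespace Equiv.Perm

variable {α M : Type*} [Fintype α] [AddCommMonoid M]

theorem sum_offDiag_apply (σ : Perm α) (f : α × α → M) :
    ∑ p ∈ univ.offDiag, f (σ p.1, σ p.2) = ∑ p ∈ univ.offDiag, f p :=
  sum_equiv (σ.prodCongr σ) (by simp) (by simp)

variable [DecidableEq α]

theorem sum_apply_pair_eq_of_ne (f : α × α → M) {x y x' y' : α} (hxy : x ≠ y) (hxy' : x' ≠ y') :
    ∑ σ : Perm α, f (σ x, σ y) = ∑ σ : Perm α, f (σ x', σ y') := by
  obtain ⟨τ, hτx, hτy⟩ :=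
    MulAction.is_two_pretransitive_iff.mp (isMultiplyPretransitive α 2) hxy' hxy
  rw [Perm.smul_def] at hτx hτy
  exact Fintype.sum_equiv (Equiv.mulRight τ) _ _ fun σ => by simp [hτx, hτy]

theorem card_offDiag_nsmul_sum_apply_pair (f : α × α → M) {x y : α} (hxy : x ≠ y) :
    #(univ : Finset α).offDiag • ∑ σ : Perm α, f (σ x, σ y)
      = Fintype.card (Perm α) • ∑ p ∈ univ.offDiag, f p := by
  calc #(univ : Finset α).offDiag • ∑ σ : Perm α, f (σ x, σ y)
      = ∑ p ∈ univ.offDiag, ∑ σ : Perm α, f (σ p.1, σ p.2) := by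
        rw [← sum_const]
        refine sum_congr rfl fun p hp => sum_apply_pair_eq_of_ne f hxy ?_
        exact (mem_offDiag.mp hp).2.2
    _ = ∑ σ : Perm α, ∑ p ∈ univ.offDiag, f p := by
        rw [sum_comm]
        exact sum_congr rfl fun σ _ => sum_offDiag_apply σ f
    _ = Fintype.card (Perm α) • ∑ p ∈ univ.offDiag, f p := by
        rw [sum_const, card_univ]

end Equiv.Perm

theorem permMat_kronecker_mulVec (q : ℕ) (g : Equiv.Perm (Fin q × Fin q))
    (v : (Fin q × Fin q) × (Fin q × Fin q) → ℝ) :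
    (permMat q g ⊗ₖ permMat q g) *ᵥ v = fun i => v (g.symm i.1, g.symm i.2) := by
  ext i
  simp [mulVec, dotProduct, permMat, kroneckerMap_apply, ite_mul, Fintype.sum_prod_type,
    ← Equiv.symm_apply_eq]

theorem avgQ_mulVec_apply (q : ℕ) (v : (Fin q × Fin q) × (Fin q × Fin q) → ℝ)
    (i : (Fin q × Fin q) × (Fin q × Fin q)) :
    (avgQ q *ᵥ v) i
      = ((q ^ 2).factorial : ℝ)⁻¹ * ∑ g : Equiv.Perm (Fin q × Fin q), v (g i.1, g i.2) := by
  rw [avgQ, smul_mulVec, sum_mulVec]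
  simp only [permMat_kronecker_mulVec, Pi.smul_apply, Finset.sum_apply, smul_eq_mul]
  congr 1
  exact Fintype.sum_equiv (Equiv.inv _) _ _ fun g => rfl

theorem card_perm_fin_prod (q : ℕ) :
    Fintype.card (Equiv.Perm (Fin q × Fin q)) = (q ^ 2).factorial := by
  simp [Fintype.card_perm, sq]

theorem card_offDiag_fin_prod (q : ℕ) :
    (#(univ : Finset (Fin q × Fin q)).offDiag : ℝ) = (q : ℝ) ^ 4 - (q : ℝ) ^ 2 := by
  rw [offDiag_card, card_univ, Fintype.card_prod, Fintype.card_fin,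
    Nat.cast_sub (Nat.le_mul_self _)]
  push_cast
  ring

theorem avgQ_mulVec_of_invariant (q : ℕ) (v : (Fin q × Fin q) × (Fin q × Fin q) → ℝ)
    (hv : ∀ (g : Equiv.Perm (Fin q × Fin q)) x y, v (g x, g y) = v (x, y)) :
    avgQ q *ᵥ v = v := by
  ext i
  rw [avgQ_mulVec_apply]
  simp only [hv, sum_const, card_univ, card_perm_fin_prod, nsmul_eq_mul]
  field_simp

theorem avgQ_mulVec_apply_of_ne (q : ℕ) (v : (Fin q × Fin q) × (Fin q × Fin q) → ℝ)
    {x y : Fin q × Fin q} (hxy : x ≠ y) :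
    ((q : ℝ) ^ 4 - (q : ℝ) ^ 2) * (avgQ q *ᵥ v) (x, y) = ∑ p ∈ univ.offDiag, v p := by
  have h := Equiv.Perm.card_offDiag_nsmul_sum_apply_pair v hxy
  rw [nsmul_eq_mul, nsmul_eq_mul, card_offDiag_fin_prod, card_perm_fin_prod] at h
  rw [avgQ_mulVec_apply, mul_left_comm, h]
  field_simp

theorem avgQ_mulVec_eq_of_apply_diag (q : ℕ) (hq : 2 ≤ q)
    (v : (Fin q × Fin q) × (Fin q × Fin q) → ℝ) (r : ℝ) (hdiag : ∀ z, v (z, z) = r)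
    (hsum : ∑ p, v p = (q : ℝ) ^ 3 * r) :
    avgQ q *ᵥ v = fun i => if i.1 = i.2 then r else r / (1 + q) := by
  ext ⟨x, y⟩
  dsimp only
  split_ifs with hxy
  · subst hxy
    rw [avgQ_mulVec_apply]
    simp only [hdiag, sum_const, card_univ, card_perm_fin_prod, nsmul_eq_mul]
    field_simp
  · have hoff : ∑ p ∈ univ.offDiag, v p = (q : ℝ) ^ 3 * r - (q : ℝ) ^ 2 * r := by
      have h := sum_diag_add_sum_offDiag univ v
      rw [univ_product_univ, hsum] at h
      simp only [hdiag, sum_const, card_univ, Fintype.card_prod, Fintype.card_fin,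
        nsmul_eq_mul] at h
      push_cast at h
      linear_combination h
    have hq' : (2 : ℝ) ≤ q := by exact_mod_cast hq
    have hne : (q : ℝ) ^ 2 * (q - 1) ≠ 0 := mul_ne_zero (by positivity) (by linarith)
    rw [eq_div_iff (by positivity)]
    exact mul_left_cancel₀ hne (by linear_combination (avgQ_mulVec_apply_of_ne q v hxy).trans hoff)

section ReplicaStates

variable (q : ℕ)

theorem twoSite_circ_circ_apply (x y : Fin q × Fin q) :
    twoSite q (circState q) (circState q) (x, y) = if x = y then (q : ℝ)⁻¹ else 0 := by
  simp only [twoSite, circState, ite_zero_mul_ite_zero, ← mul_inv,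
    Real.mul_self_sqrt (Nat.cast_nonneg q), Prod.ext_iff]

theorem twoSite_flat_flat_apply (x y : Fin q × Fin q) :
    twoSite q (flatState q) (flatState q) (x, y) = (q : ℝ)⁻¹ * (q : ℝ)⁻¹ :=
  rfl

theorem twoSite_circ_flat_apply (a b c d : Fin q) :
    twoSite q (circState q) (flatState q) ((a, b), (c, d))
      = if a = c then (Real.sqrt q)⁻¹ * (q : ℝ)⁻¹ else 0 := by
  simp only [twoSite, circState, flatState, ite_mul, zero_mul]

theorem twoSite_flat_circ_apply (a b c d : Fin q) :
    twoSite q (flatState q) (circState q) ((a, b), (c, d))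
      = if b = d then (Real.sqrt q)⁻¹ * (q : ℝ)⁻¹ else 0 := by
  simp only [twoSite, circState, flatState, mul_ite, mul_zero, mul_comm]

theorem twoSite_circ_circ_apply_perm (g : Equiv.Perm (Fin q × Fin q)) (x y : Fin q × Fin q) :
    twoSite q (circState q) (circState q) (g x, g y)
      = twoSite q (circState q) (circState q) (x, y) := by
  simp only [twoSite_circ_circ_apply, g.injective.eq_iff]

theorem sum_twoSite_circ_flat :
    ∑ p, twoSite q (circState q) (flatState q) p
      = (q : ℝ) ^ 3 * ((Real.sqrt q)⁻¹ * (q : ℝ)⁻¹) := by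
  simp [Fintype.sum_prod_type, twoSite_circ_flat_apply, pow_succ, mul_assoc]

theorem sum_twoSite_flat_circ :
    ∑ p, twoSite q (flatState q) (circState q) p
      = (q : ℝ) ^ 3 * ((Real.sqrt q)⁻¹ * (q : ℝ)⁻¹) := by
  simp [Fintype.sum_prod_type, twoSite_flat_circ_apply, pow_succ, mul_assoc]

theorem sqrt_div_smul_twoSite_circ_add_flat (hq : 0 < q) :
    (Real.sqrt q / (1 + q)) •
        (twoSite q (circState q) (circState q) + twoSite q (flatState q) (flatState q))
      = fun i => if i.1 = i.2 then (Real.sqrt q)⁻¹ * (q : ℝ)⁻¹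
          else (Real.sqrt q)⁻¹ * (q : ℝ)⁻¹ / (1 + q) := by
  have hq' : (0 : ℝ) < q := Nat.cast_pos.mpr hq
  ext ⟨x, y⟩
  simp only [Pi.smul_apply, Pi.add_apply, smul_eq_mul, twoSite_circ_circ_apply,
    twoSite_flat_flat_apply]
  split_ifs
  all_goals
    field_simp
    rw [Real.sq_sqrt hq'.le]
    ring

end ReplicaStates

theorem avgQ_action_on_replica_states (q : ℕ) (hq : 2 ≤ q) :
    (avgQ q).mulVec (twoSite q (circState q) (circState q))
        = twoSite q (circState q) (circState q) ∧
    (avgQ q).mulVec (twoSite q (flatState q) (flatState q))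
        = twoSite q (flatState q) (flatState q) ∧
    (avgQ q).mulVec (twoSite q (circState q) (flatState q))
        = (Real.sqrt q / (1 + q)) •
            (twoSite q (circState q) (circState q) + twoSite q (flatState q) (flatState q)) ∧
    (avgQ q).mulVec (twoSite q (flatState q) (circState q))
        = (Real.sqrt q / (1 + q)) •
            (twoSite q (circState q) (circState q) + twoSite q (flatState q) (flatState q)) := by
  rw [sqrt_div_smul_twoSite_circ_add_flat q (by omega)]
  refine ⟨avgQ_mulVec_of_invariant q _ (twoSite_circ_circ_apply_perm q),
    avgQ_mulVec_of_invariant q _ fun _ _ _ => rfl,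
    avgQ_mulVec_eq_of_apply_diag q hq _ _ ?_ (sum_twoSite_circ_flat q),
    avgQ_mulVec_eq_of_apply_diag q hq _ _ ?_ (sum_twoSite_flat_circ q)⟩
  · rintro ⟨a, b⟩
    simp [twoSite_circ_flat_apply]
  · rintro ⟨a, b⟩
    simp [twoSite_flat_circ_apply]
end

section
/- Let α be a real number and suppose u(x,y) satisfies u(x,y) = u(x-1,y) + α·u(x,y-1) for all x,y ≥ 1, with boundary values u(x,0) = φ_x for x ≥ 0 and u(0,y) = ψ_y for y ≥ 1. Then for all x, y ≥ 0, u(x,y) = α^y ∑_{m=0}^{x-1} C(y+m-1, m) φ_{x-m} + ∑_{n=0}^{y-1} α^n C(x+n-1, n) ψ_{y-n} + δ_{x,0} δ_{y,0} φ_0. -/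
/-!
Both sums in the closed form are instances of one weighted binomial sum `pathSum`, which obeys
a Pascal rule in its two arguments; this makes the closed form satisfy the recurrence, and it
matches the boundary values. A solution of the recurrence is determined by its boundary values,
by induction on `x` and then `y`.
-/

open Finset

section PathSum

variable {R : Type*} [Semiring R]

/-- The truncated subtraction makes `Nat.choose (0 + 0 - 1) 0 = 1`, matching `C(-1, 0) = 1`. -/
def pathSum (β : R) (f : ℕ → R) (a b : ℕ) : R :=
  ∑ m ∈ range a, β ^ m * (Nat.choose (b + m - 1) m : R) * f (a - m)

@[simp]
theorem pathSum_zero_left (β : R) (f : ℕ → R) (b : ℕ) : pathSum β f 0 b = 0 := by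
  simp [pathSum]

theorem pathSum_succ_zero (β : R) (f : ℕ → R) (a : ℕ) : pathSum β f (a + 1) 0 = f (a + 1) := by
  rw [pathSum, sum_range_succ']
  simp

theorem pathSum_succ_succ (β : R) (f : ℕ → R) (a b : ℕ) :
    pathSum β f (a + 1) (b + 1) = pathSum β f (a + 1) b + β * pathSum β f a (b + 1) := by
  simp only [pathSum, sum_range_succ' _ a, mul_sum]
  have pascal : ∀ m ∈ range a,
      β ^ (m + 1) * (Nat.choose (b + 1 + (m + 1) - 1) (m + 1) : R) * f (a + 1 - (m + 1)) =
        β ^ (m + 1) * (Nat.choose (b + (m + 1) - 1) (m + 1) : R) * f (a + 1 - (m + 1)) +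
          β * (β ^ m * (Nat.choose (b + 1 + m - 1) m : R) * f (a - m)) := by
    intro m _
    rw [show b + 1 + (m + 1) - 1 = b + m + 1 by omega, show b + (m + 1) - 1 = b + m by omega,
      show b + 1 + m - 1 = b + m by omega, Nat.choose_succ_succ', Nat.add_sub_add_right, pow_succ']
    push_cast
    noncomm_ring
  rw [sum_congr rfl pascal, sum_add_distrib]
  simp [add_right_comm]

end PathSum

theorem eq_of_boundary_of_recurrence {R : Type*} [Semiring R] (α : R) {u v : ℕ → ℕ → R}
    (hu : ∀ x y, u (x + 1) (y + 1) = u x (y + 1) + α * u (x + 1) y)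
    (hv : ∀ x y, v (x + 1) (y + 1) = v x (y + 1) + α * v (x + 1) y)
    (hx : ∀ x, u x 0 = v x 0) (hy : ∀ y, u 0 y = v 0 y) : u = v := by
  funext x y
  induction x generalizing y with
  | zero => exact hy y
  | succ x ihx =>
    induction y with
    | zero => exact hx (x + 1)
    | succ y ihy => rw [hu, hv, ihx, ihy]

theorem two_dim_linear_recurrence_solution (α : ℝ) (u : ℕ → ℕ → ℝ) (φ ψ : ℕ → ℝ)
    (hrec : ∀ x y : ℕ, 1 ≤ x → 1 ≤ y → u x y = u (x - 1) y + α * u x (y - 1))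
    (hφ : ∀ x : ℕ, u x 0 = φ x)
    (hψ : ∀ y : ℕ, 1 ≤ y → u 0 y = ψ y) :
    ∀ x y : ℕ,
      u x y =
        α ^ y * ∑ m ∈ Finset.range x, (Nat.choose (y + m - 1) m : ℝ) * φ (x - m)
        + ∑ n ∈ Finset.range y, α ^ n * (Nat.choose (x + n - 1) n : ℝ) * ψ (y - n)
        + (if x = 0 ∧ y = 0 then φ 0 else 0) := by
  set F : ℕ → ℕ → ℝ := fun x y =>
    α ^ y * pathSum 1 φ x y + pathSum α ψ y x + if x = 0 ∧ y = 0 then φ 0 else 0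
  suffices u = F by simp [this, F, pathSum]
  refine eq_of_boundary_of_recurrence α (fun x y => hrec (x + 1) (y + 1) x.succ_pos y.succ_pos)
    (fun x y => ?_) (fun x => ?_) (fun y => ?_)
  · simp only [F, pathSum_succ_succ, Nat.add_eq_zero_iff, one_ne_zero, and_false, false_and,
      if_false]
    ring
  · rcases x with _ | x <;> simp [F, hφ, pathSum_succ_zero]
  · rcases y with _ | y <;> simp [F, hφ, hψ, pathSum_succ_zero]
end

section
/- Suppose Q₂(m,n) (m ≥ 0, n ≥ 0 even) satisfies Q₂(m,n) = q^{-1}(2Q₂(m−1,n) + Q₂(m−1,n−2) + Q₂(m−1,n+2)) for n ≥ 2, Q₂(m,0) = q^{-1}(2Q₂(m−1,0) + Q₂(m−1,2)), and Q₂(0,n) = c^n for a constant c. Then Q₂(m,2n) = q^{−m} ∑_{k=0}^{m+n} c^{2k} ( C(2m, m+n−k) − C(2m, m−2−n−k) ). -/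
/-- Binomial coefficient on integers with the convention that it vanishes
whenever `b < 0` or `b > a`. -/
def ichoose (a b : ℤ) : ℤ :=
  if 0 ≤ b ∧ b ≤ a then (a.toNat.choose b.toNat : ℤ) else 0

/-!
The recurrences determine `Q₂` from its initial values, so it suffices to check that the
right-hand side `q ^ (-m) * F m n` satisfies them. For `F` they read
`F (m + 1) n = F m (n - 1) + 2 F m n + F m (n + 1)` on `n ≥ 0` with the absorbing boundary
`F m (-1) = 0`. The free propagator of this walk is `C(2m, m + j)`; reflecting it in `-1` gives the
absorbing one, and `C(2m, m - 2 - n - k) = C(2m, m + n + k + 2)` is that reflected term.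
-/

open Finset

theorem ichoose_of_neg {a b : ℤ} (hb : b < 0) : ichoose a b = 0 := by
  simp [ichoose, hb.not_ge]

theorem ichoose_of_lt {a b : ℤ} (hab : a < b) : ichoose a b = 0 := by
  simp [ichoose, hab.not_ge]

theorem ichoose_natCast (a j : ℕ) : ichoose a j = a.choose j := by
  unfold ichoose
  split_ifs with h
  · simp
  · rw [Nat.choose_eq_zero_of_lt (by omega)]; simp

theorem ichoose_sub {a : ℤ} (ha : 0 ≤ a) (b : ℤ) : ichoose a (a - b) = ichoose a b := by
  lift a to ℕ using ha
  rcases lt_or_ge b 0 with hb | hb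
  · rw [ichoose_of_lt (by omega), ichoose_of_neg hb]
  rcases le_or_gt b a with hba | hba
  · lift b to ℕ using hb
    rw [← Nat.cast_sub (by omega), ichoose_natCast, ichoose_natCast,
      Nat.choose_symm (by omega)]
  · rw [ichoose_of_neg (by omega), ichoose_of_lt hba]

theorem ichoose_succ_succ {a : ℤ} (ha : 0 ≤ a) (b : ℤ) :
    ichoose (a + 1) (b + 1) = ichoose a b + ichoose a (b + 1) := by
  lift a to ℕ using ha
  rcases lt_trichotomy b (-1) with hb | rfl | hb
  · rw [ichoose_of_neg (by omega), ichoose_of_neg (by omega), ichoose_of_neg (by omega), zero_add]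
  · norm_num [ichoose]
    positivity
  · lift b to ℕ using (by omega)
    rw [← Nat.cast_succ, ← Nat.cast_succ, ichoose_natCast, ichoose_natCast,
      ichoose_natCast, Nat.choose_succ_succ']
    push_cast; ring

/-- The coefficient of `x ^ j` in `(x + 2 + x⁻¹) ^ m = x ^ (-m) * (1 + x) ^ (2 * m)`, i.e. the weight
of the `m`-step walks from `0` to `j` with steps `-1, 0, +1` of weights `1, 2, 1`. -/
def centeredChoose (m : ℕ) (j : ℤ) : ℤ := ichoose (2 * m) (m + j)

theorem centeredChoose_neg (m : ℕ) (j : ℤ) : centeredChoose m (-j) = centeredChoose m j := by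
  unfold centeredChoose
  rw [← ichoose_sub (by positivity)]
  ring_nf

theorem centeredChoose_zero_left (j : ℤ) : centeredChoose 0 j = if j = 0 then 1 else 0 := by
  unfold centeredChoose
  split_ifs with hj
  · subst hj; simpa using ichoose_natCast 0 0
  · rcases lt_or_gt_of_ne hj with hj | hj
    · exact ichoose_of_neg (by simpa)
    · exact ichoose_of_lt (by simpa)

theorem centeredChoose_eq_zero_of_lt {m : ℕ} {j : ℤ} (h : m < j) : centeredChoose m j = 0 :=
  ichoose_of_lt (by omega)

theorem centeredChoose_eq_zero_of_lt_neg {m : ℕ} {j : ℤ} (h : j < -m) : centeredChoose m j = 0 :=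
  ichoose_of_neg (by omega)

theorem centeredChoose_succ (m : ℕ) (j : ℤ) :
    centeredChoose (m + 1) j =
      centeredChoose m (j - 1) + 2 * centeredChoose m j + centeredChoose m (j + 1) := by
  unfold centeredChoose
  have h2m : (0 : ℤ) ≤ 2 * m := by positivity
  have h₁ := ichoose_succ_succ h2m (m + (j - 1))
  have h₂ := ichoose_succ_succ h2m (m + j)
  have h₃ := ichoose_succ_succ (a := 2 * m + 1) (by omega) (m + j)
  rw [add_assoc, sub_add_cancel] at h₁
  rw [show 2 * ((m + 1 : ℕ) : ℤ) = 2 * m + 1 + 1 by push_cast; ring,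
    show ((m + 1 : ℕ) : ℤ) + j = m + j + 1 by push_cast; ring, h₃, h₁, h₂, add_assoc (m : ℤ) j 1]
  ring

/-- Method of images: subtracting the walks reflected in the mirror at `-1` keeps the bulk
recurrence and makes the term vanish at `n = -1`, which turns the bulk recurrence at `n = 0` into
the boundary one. -/
def imageTerm (m : ℕ) (n k : ℤ) : ℤ := centeredChoose m (n - k) - centeredChoose m (n + k + 2)

theorem imageTerm_succ (m : ℕ) (n k : ℤ) :
    imageTerm (m + 1) (n + 1) k =
      imageTerm m n k + 2 * imageTerm m (n + 1) k + imageTerm m (n + 2) k := by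
  simp only [imageTerm, centeredChoose_succ]
  ring_nf

theorem imageTerm_neg_one (m : ℕ) (k : ℤ) : imageTerm m (-1) k = 0 := by
  rw [imageTerm, ← centeredChoose_neg]
  ring_nf

theorem imageTerm_succ_zero (m : ℕ) (k : ℤ) :
    imageTerm (m + 1) 0 k = 2 * imageTerm m 0 k + imageTerm m 1 k := by
  have h := imageTerm_succ m (-1) k
  rwa [imageTerm_neg_one, zero_add, neg_add_cancel, show (-1 : ℤ) + 2 = 1 by norm_num] at h

theorem imageTerm_zero_left (n k : ℕ) : imageTerm 0 n k = if k = n then 1 else 0 := by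
  simp only [imageTerm, centeredChoose_zero_left]
  split_ifs <;> omega

theorem imageTerm_eq_zero_of_lt {m n k : ℕ} (h : m + n < k) : imageTerm m n k = 0 := by
  rw [imageTerm, centeredChoose_eq_zero_of_lt_neg (by omega),
    centeredChoose_eq_zero_of_lt (by omega), sub_zero]

theorem imageTerm_eq_choose_sub_ichoose {m n k : ℕ} (hk : k ≤ m + n) :
    imageTerm m n k = (2 * m).choose (m + n - k) - ichoose (2 * m) ((m : ℤ) - 2 - n - k) := by
  have hchoose : centeredChoose m (n - k) = (2 * m).choose (m + n - k) := by
    rw [centeredChoose, ← ichoose_natCast]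
    push_cast [hk]
    ring_nf
  have hreflect : centeredChoose m (n + k + 2) = ichoose (2 * m) ((m : ℤ) - 2 - n - k) := by
    rw [← centeredChoose_neg, centeredChoose]
    ring_nf
  rw [imageTerm, hchoose, hreflect]

section ImageSum

variable {R : Type*} [CommRing R]

def imageSum (c : R) (m n : ℕ) : R :=
  ∑ k ∈ range (m + n + 1), c ^ (2 * k) * (imageTerm m n k : R)

theorem imageSum_eq_sum_range (c : R) {m n N : ℕ} (h : m + n + 1 ≤ N) :
    imageSum c m n = ∑ k ∈ range N, c ^ (2 * k) * (imageTerm m n k : R) := by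
  refine sum_subset (range_subset_range.2 h) fun k _ hk => ?_
  rw [imageTerm_eq_zero_of_lt (by simpa using hk), Int.cast_zero, mul_zero]

theorem imageSum_zero_left (c : R) (n : ℕ) : imageSum c 0 n = c ^ (2 * n) := by
  simp [imageSum, imageTerm_zero_left]

theorem imageSum_succ_succ (c : R) (m n : ℕ) :
    imageSum c (m + 1) (n + 1) =
      2 * imageSum c m (n + 1) + imageSum c m n + imageSum c m (n + 2) := by
  rw [imageSum_eq_sum_range c (m := m + 1) (n := n + 1) (N := m + n + 3) (by omega),
    imageSum_eq_sum_range c (m := m) (n := n + 1) (N := m + n + 3) (by omega),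
    imageSum_eq_sum_range c (m := m) (n := n) (N := m + n + 3) (by omega),
    imageSum_eq_sum_range c (m := m) (n := n + 2) (N := m + n + 3) (by omega),
    mul_sum, ← sum_add_distrib, ← sum_add_distrib]
  refine sum_congr rfl fun k _ => ?_
  push_cast
  rw [imageTerm_succ]
  push_cast
  ring

theorem imageSum_succ_zero (c : R) (m : ℕ) :
    imageSum c (m + 1) 0 = 2 * imageSum c m 0 + imageSum c m 1 := by
  rw [imageSum_eq_sum_range c (m := m + 1) (n := 0) (N := m + 2) (by omega),
    imageSum_eq_sum_range c (m := m) (n := 0) (N := m + 2) (by omega),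
    imageSum_eq_sum_range c (m := m) (n := 1) (N := m + 2) (by omega),
    mul_sum, ← sum_add_distrib]
  refine sum_congr rfl fun k _ => ?_
  push_cast
  rw [imageTerm_succ_zero]
  push_cast
  ring

theorem sum_choose_sub_ichoose_eq_imageSum (c : R) (m n : ℕ) :
    ∑ k ∈ range (m + n + 1), c ^ (2 * k) *
        (((2 * m).choose (m + n - k) : R) - (ichoose (2 * m) ((m : ℤ) - 2 - n - k) : R)) =
      imageSum c m n := by
  refine sum_congr rfl fun k hk => ?_
  rw [imageTerm_eq_choose_sub_ichoose (by simp at hk; omega)]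
  push_cast
  rfl

end ImageSum

theorem eq_of_purity_recurrence {R : Type*} [Semiring R] {a : R} {F G : ℕ → ℕ → R}
    (hF : ∀ m n, F (m + 1) (n + 1) = a * (2 * F m (n + 1) + F m n + F m (n + 2)))
    (hF₀ : ∀ m, F (m + 1) 0 = a * (2 * F m 0 + F m 1))
    (hG : ∀ m n, G (m + 1) (n + 1) = a * (2 * G m (n + 1) + G m n + G m (n + 2)))
    (hG₀ : ∀ m, G (m + 1) 0 = a * (2 * G m 0 + G m 1))
    (h₀ : ∀ n, F 0 n = G 0 n) : F = G := by
  funext m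
  induction m with
  | zero => exact funext h₀
  | succ m ih =>
    funext n
    cases n with
    | zero => rw [hF₀, hG₀, ih]
    | succ n => rw [hF, hG, ih]

theorem purity_recurrence_solution_general (q c : ℝ) (Q₂ : ℕ → ℕ → ℝ)
    (hrec : ∀ m n : ℕ, 1 ≤ m → 2 ≤ n → Even n →
      Q₂ m n = q⁻¹ * (2 * Q₂ (m - 1) n + Q₂ (m - 1) (n - 2) + Q₂ (m - 1) (n + 2)))
    (hrec0 : ∀ m : ℕ, 1 ≤ m → Q₂ m 0 = q⁻¹ * (2 * Q₂ (m - 1) 0 + Q₂ (m - 1) 2))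
    (hinit : ∀ n : ℕ, Even n → Q₂ 0 n = c ^ n) :
    ∀ m n : ℕ,
      Q₂ m (2 * n) = q ^ (-(m : ℤ)) *
        ∑ k ∈ Finset.range (m + n + 1),
          c ^ (2 * k) *
            (((2 * m).choose (m + n - k) : ℝ)
              - (ichoose (2 * m) ((m : ℤ) - 2 - n - k) : ℝ)) := by
  have hpow (m : ℕ) : q ^ (-((m + 1 : ℕ) : ℤ)) = q⁻¹ * q ^ (-(m : ℤ)) := by
    simp only [zpow_neg, zpow_natCast, pow_succ, mul_inv, mul_comm]
  have h := eq_of_purity_recurrence (a := q⁻¹) (F := fun m n => Q₂ m (2 * n))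
    (G := fun m n => q ^ (-(m : ℤ)) * imageSum c m n)
    (fun m n => by
      rw [hrec (m + 1) _ (by omega) (by omega) (even_two_mul _)]
      congr 4)
    (fun m => by simpa using hrec0 (m + 1) (by omega))
    (fun m n => by rw [hpow, imageSum_succ_succ]; ring)
    (fun m => by rw [hpow, imageSum_succ_zero]; ring)
    (fun n => by simp [hinit _ (even_two_mul n), imageSum_zero_left])
  intro m n
  rw [sum_choose_sub_ichoose_eq_imageSum]
  exact congrFun (congrFun h m) n

theorem purity_recurrence_solution (q c : ℝ) (hq : 0 < q) (Q₂ : ℕ → ℕ → ℝ)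
    (hrec : ∀ m n : ℕ, 1 ≤ m → 2 ≤ n → Even n →
      Q₂ m n = q⁻¹ * (2 * Q₂ (m - 1) n + Q₂ (m - 1) (n - 2) + Q₂ (m - 1) (n + 2)))
    (hrec0 : ∀ m : ℕ, 1 ≤ m → Q₂ m 0 = q⁻¹ * (2 * Q₂ (m - 1) 0 + Q₂ (m - 1) 2))
    (hinit : ∀ n : ℕ, Even n → Q₂ 0 n = c ^ n) :
    ∀ m n : ℕ,
      Q₂ m (2 * n) = q ^ (-(m : ℤ)) *
        ∑ k ∈ Finset.range (m + n + 1),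
          c ^ (2 * k) *
            (((2 * m).choose (m + n - k) : ℝ)
              - (ichoose (2 * m) ((m : ℤ) - 2 - n - k) : ℝ)) :=
  purity_recurrence_solution_general q c Q₂ hrec hrec0 hinit
end
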